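/- Let λ, μ ∈ ℝ satisfy the strong convexity condition μ > 0 and 3λ + 2μ > 0. Let P : ℝ³ → ℝ be a harmonic homogeneous polynomial of degree n ≥ 0, set a = (2nλ + 2(3n+1)μ) / ((n+3)λ + (n+5)μ), and define 𝒩(x) = a P(x) x + (1 − a/(2n+1) − |x|²) ∇P(x). Then a > 0 or (n, P) trivial, and for every x with |x| = 1, the traction of 𝒩 satisfies λ(∇·𝒩)(x) x + μ(∇𝒩(x) + ∇𝒩(x)ᵗ) x = μ (2(2n+1)/a − 3) 𝒩(x), provided a ≠ 0. -/

import Mathlib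

open MeasureTheory Real Matrix
open scoped RealInnerProductSpace

noncomputable section

/-- Three-dimensional Euclidean space. -/
abbrev E3 : Type := EuclideanSpace ℝ (Fin 3)

/-- Build an element of `E3` from coordinates. -/
def toE3 (v : Fin 3 → ℝ) : E3 := (WithLp.equiv 2 (Fin 3 → ℝ)).symm v

/-- Partial derivative in the `i`-th coordinate direction. -/
def pd (f : E3 → ℝ) (i : Fin 3) (x : E3) : ℝ :=
  fderiv ℝ f x (EuclideanSpace.single i 1)

/-- The gradient, as the vector of partial derivatives. -/
def grad3 (f : E3 → ℝ) (x : E3) : E3 := toE3 fun i => pd f i x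

/-- The Laplacian: the sum of the second partial derivatives. -/
def lap3 (f : E3 → ℝ) (x : E3) : ℝ := ∑ i, pd (pd f i) i x

/-- Divergence of a vector field. -/
def div3 (u : E3 → E3) (x : E3) : ℝ := ∑ i, pd (fun y => u y i) i x

/-- Componentwise Laplacian of a vector field. -/
def vlap3 (u : E3 → E3) (x : E3) : E3 := toE3 fun i => lap3 (fun y => u y i) x

/-- Cross product in `ℝ³`. -/
def cross3 (u v : E3) : E3 :=
  toE3 ![u 1 * v 2 - u 2 * v 1, u 2 * v 0 - u 0 * v 2, u 0 * v 1 - u 1 * v 0]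

/-- The function `ℝ³ → ℝ` determined by a polynomial in three variables. -/
def polyFun (P : MvPolynomial (Fin 3) ℝ) : E3 → ℝ :=
  fun x => MvPolynomial.eval (fun i => x i) P

/-- The Jacobian matrix `(∇u)_{ij} = ∂u_i/∂x_j` of a vector field. -/
def jac3 (u : E3 → E3) (x : E3) : Matrix (Fin 3) (Fin 3) ℝ :=
  Matrix.of fun i j => fderiv ℝ (fun y => u y i) x (EuclideanSpace.single j 1)

/-!
Every component of `𝒩` is a polynomial, `𝒩ᵢ = a P Xᵢ + (c - |X|²) ∂ᵢP` with `c = 1 - a/(2n+1)`,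
so its Jacobian is computed symbolically with `pderiv`. The three quantities entering the
traction, `∇·𝒩`, `(∇𝒩) x` and `(∇𝒩)ᵗ x`, are reduced by Euler's identity
`∑ⱼ Xⱼ ∂ⱼQ = (deg Q) Q` for the homogeneous pieces `P`, `∂ᵢP`, `Xᵢ`, `|X|²`, by
`∑ⱼ Xⱼ ∂ᵢQⱼ = ∂ᵢ(∑ⱼ Xⱼ Qⱼ) - Qᵢ`, and by `ΔP = 0`. On `|x| = 1` the traction becomes
`α P(x) x + β ∇P(x)`: the choice of `c` makes `β` agree with the right-hand side for every `a ≠ 0`,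
and the value of `a` is exactly what makes `α` agree.
-/

open MvPolynomial
namespace MvPolynomial

variable {σ R : Type*} [Fintype σ] [CommRing R]

def sumSqX : MvPolynomial σ R := ∑ k, X k ^ 2

theorem isHomogeneous_sumSqX : (sumSqX : MvPolynomial σ R).IsHomogeneous 2 :=
  IsHomogeneous.sum _ _ _ fun k _ => isHomogeneous_X_pow k 2

theorem pderiv_sumSqX (i : σ) : pderiv i (sumSqX : MvPolynomial σ R) = 2 * X i := by
  classical
  simp [sumSqX, pderiv_X, Pi.single_apply]

def eulerDerivation : Derivation R (MvPolynomial σ R) (MvPolynomial σ R) :=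
  ∑ i : σ, (X i : MvPolynomial σ R) • pderiv i

theorem eulerDerivation_apply (f : MvPolynomial σ R) :
    eulerDerivation f = ∑ i, X i * pderiv i f := by
  rw [eulerDerivation, ← Derivation.coeFnAddMonoidHom_apply, map_sum, Finset.sum_apply]
  rfl

theorem IsHomogeneous.eulerDerivation_eq {φ : MvPolynomial σ R} {n : ℕ}
    (h : φ.IsHomogeneous n) : eulerDerivation φ = n * φ := by
  rw [eulerDerivation_apply, h.sum_X_mul_pderiv, nsmul_eq_mul]

theorem IsHomogeneous.eulerDerivation_pderiv {φ : MvPolynomial σ R} {n : ℕ}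
    (h : φ.IsHomogeneous n) (i : σ) :
    eulerDerivation (pderiv i φ) = ((n : MvPolynomial σ R) - 1) * pderiv i φ := by
  obtain _ | n := n
  · rw [← totalDegree_zero_iff_isHomogeneous, totalDegree_eq_zero_iff_eq_C] at h
    rw [h, pderiv_C, map_zero, mul_zero]
  · rw [h.pderiv.eulerDerivation_eq]
    push_cast
    ring

theorem sum_X_mul_pderiv_eq_pderiv_sum_sub (Q : σ → MvPolynomial σ R) (i : σ) :
    ∑ j, X j * pderiv i (Q j) = pderiv i (∑ j, X j * Q j) - Q i := by
  classical
  simp [pderiv_X, Pi.single_apply, Finset.sum_add_distrib]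

def nFieldPoly (a c : R) (P : MvPolynomial σ R) (i : σ) : MvPolynomial σ R :=
  C a * P * X i + (C c - sumSqX) * pderiv i P

variable {P : MvPolynomial σ R} {n : ℕ}

theorem IsHomogeneous.sum_X_mul_pderiv_nFieldPoly (h : P.IsHomogeneous n) (a c : R) (i : σ) :
    ∑ j, X j * pderiv j (nFieldPoly a c P i) =
      ((n : MvPolynomial σ R) + 1) * C a * P * X i
        + (((n : MvPolynomial σ R) - 1) * C c - ((n : MvPolynomial σ R) + 1) * sumSqX)
          * pderiv i P := by
  have hC : ∀ r : R, eulerDerivation (C r : MvPolynomial σ R) = 0 := fun r => by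
    simp [(isHomogeneous_C σ r).eulerDerivation_eq]
  have hX := (isHomogeneous_X R i).eulerDerivation_eq
  have hS := (isHomogeneous_sumSqX (σ := σ) (R := R)).eulerDerivation_eq
  rw [← eulerDerivation_apply, nFieldPoly]
  simp only [map_add, map_sub, Derivation.leibniz, smul_eq_mul, hC, hX, hS, h.eulerDerivation_eq,
    h.eulerDerivation_pderiv]
  push_cast
  ring

theorem IsHomogeneous.sum_X_mul_pderiv_nFieldPoly_transpose (h : P.IsHomogeneous n) (a c : R)
    (i : σ) :
    ∑ j, X j * pderiv i (nFieldPoly a c P j) =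
      (C a - 2 * (n : MvPolynomial σ R)) * P * X i
        + (C a * sumSqX + ((n : MvPolynomial σ R) - 1) * (C c - sumSqX)) * pderiv i P := by
  have hsum : ∑ j, X j * nFieldPoly a c P j =
      C a * P * sumSqX + (C c - sumSqX) * ((n : MvPolynomial σ R) * P) := calc
    _ = C a * P * ∑ j, X j ^ 2 + (C c - sumSqX) * ∑ j, X j * pderiv j P := by
      rw [Finset.mul_sum, Finset.mul_sum, ← Finset.sum_add_distrib]
      exact Finset.sum_congr rfl fun j _ => by rw [nFieldPoly]; ring
    _ = _ := by rw [← sumSqX, h.sum_X_mul_pderiv, nsmul_eq_mul]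
  rw [sum_X_mul_pderiv_eq_pderiv_sum_sub, hsum, nFieldPoly]
  simp only [map_add, pderiv_mul, map_sub, pderiv_C, pderiv_sumSqX, Derivation.map_natCast]
  ring

theorem IsHomogeneous.sum_pderiv_nFieldPoly (h : P.IsHomogeneous n) (a c : R) :
    ∑ i, pderiv i (nFieldPoly a c P i) =
      (((n : MvPolynomial σ R) + (Fintype.card σ : MvPolynomial σ R)) * C a
          - 2 * (n : MvPolynomial σ R)) * P
        + (C c - (sumSqX : MvPolynomial σ R)) * ∑ i, pderiv i (pderiv i P) := by
  calc ∑ i, pderiv i (nFieldPoly a c P i)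
      = ∑ i, ((C a - 2) * (X i * pderiv i P) + C a * P
          + (C c - sumSqX) * pderiv i (pderiv i P)) := by
        refine Finset.sum_congr rfl fun i _ => ?_
        simp only [nFieldPoly, map_add, pderiv_mul, map_sub, pderiv_C, pderiv_sumSqX, pderiv_X_self]
        ring
    _ = _ := by
      simp only [Finset.sum_add_distrib, ← Finset.mul_sum, Finset.sum_const, Finset.card_univ,
        h.sum_X_mul_pderiv, nsmul_eq_mul]
      ring

end MvPolynomial

section EuclideanCalculus

variable {ι : Type*} [Fintype ι]

theorem MvPolynomial.hasFDerivAt_eval (P : MvPolynomial ι ℝ) (x : EuclideanSpace ℝ ι) :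
    HasFDerivAt (fun y : EuclideanSpace ℝ ι => eval (fun i => y i) P)
      (∑ j, eval (fun i => x i) (pderiv j P) •
        (EuclideanSpace.proj j : EuclideanSpace ℝ ι →L[ℝ] ℝ)) x := by
  classical
  induction P using MvPolynomial.induction_on with
  | C a => simpa using hasFDerivAt_const a x
  | add p q hp hq =>
    have h : HasFDerivAt
        (fun y : EuclideanSpace ℝ ι => eval (fun i => y i) p + eval (fun i => y i) q)
        (_ : EuclideanSpace ℝ ι →L[ℝ] ℝ) x := hp.add hq
    convert h using 1
    · funext y; simp
    · simp [add_smul, Finset.sum_add_distrib]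
  | mul_X p i hp =>
    have h : HasFDerivAt (fun y : EuclideanSpace ℝ ι => eval (fun i => y i) p * y i)
        (_ : EuclideanSpace ℝ ι →L[ℝ] ℝ) x :=
      hp.mul (EuclideanSpace.proj (𝕜 := ℝ) i).hasFDerivAt
    convert h using 1
    · funext y; simp
    · ext v
      simp [pderiv_X, Pi.single_apply, apply_ite, ite_mul, add_mul, Finset.sum_add_distrib,
        Finset.mul_sum, mul_assoc]

theorem MvPolynomial.eval_sumSqX (x : EuclideanSpace ℝ ι) :
    eval (fun i => x i) sumSqX = ‖x‖ ^ 2 := by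
  simp [sumSqX, EuclideanSpace.norm_sq_eq]

end EuclideanCalculus

theorem toE3_apply (v : Fin 3 → ℝ) (i : Fin 3) : toE3 v i = v i := rfl

theorem pd_polyFun (P : MvPolynomial (Fin 3) ℝ) (i : Fin 3) (x : E3) :
    pd (polyFun P) i x = polyFun (pderiv i P) x := by
  have h : HasFDerivAt (polyFun P) _ x := hasFDerivAt_eval P x
  rw [pd, h.fderiv]
  simp [polyFun, PiLp.single_apply]

theorem grad3_polyFun_apply (P : MvPolynomial (Fin 3) ℝ) (x : E3) (i : Fin 3) :
    grad3 (polyFun P) x i = polyFun (pderiv i P) x :=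
  pd_polyFun P i x

theorem lap3_polyFun (P : MvPolynomial (Fin 3) ℝ) (x : E3) :
    lap3 (polyFun P) x = polyFun (∑ i, pderiv i (pderiv i P)) x := by
  have h : ∀ i, pd (polyFun P) i = polyFun (pderiv i P) := fun i => funext (pd_polyFun P i)
  simp only [lap3, h, pd_polyFun, polyFun, map_sum]

section PolynomialField

variable {u : E3 → E3} {Q : Fin 3 → MvPolynomial (Fin 3) ℝ}

theorem jac3_apply_of_polyFun (hu : ∀ y i, u y i = polyFun (Q i) y) (x : E3) (i j : Fin 3) :
    jac3 u x i j = polyFun (pderiv j (Q i)) x := by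
  have : (fun y => u y i) = polyFun (Q i) := funext fun y => hu y i
  exact (congrArg (fun f => pd f j x) this).trans (pd_polyFun (Q i) j x)

theorem traction_apply_of_polyFun (hu : ∀ y i, u y i = polyFun (Q i) y) (lam mu : ℝ) (x : E3)
    (i : Fin 3) :
    ((lam * div3 u x) • x + mu • toE3 ((jac3 u x + (jac3 u x)ᵀ) *ᵥ fun i => x i)) i =
      lam * polyFun (∑ j, pderiv j (Q j)) x * x i
        + mu * (polyFun (∑ j, X j * pderiv j (Q i)) x
          + polyFun (∑ j, X j * pderiv i (Q j)) x) := by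
  have hdiv : div3 u x = ∑ j, jac3 u x j j := rfl
  simp only [PiLp.add_apply, PiLp.smul_apply, smul_eq_mul, toE3_apply, mulVec, dotProduct,
    Matrix.add_apply, transpose_apply, hdiv, jac3_apply_of_polyFun hu, polyFun, map_sum, map_mul,
    eval_X, add_mul, Finset.sum_add_distrib, mul_comm (x _)]

end PolynomialField

/-- under strong convexity, with
`a = (2nλ + 2(3n+1)μ)/((n+3)λ + (n+5)μ)` and
`𝒩(x) = a P(x) x + (1 − a/(2n+1) − |x|²) ∇P(x)` for a harmonic homogeneous polynomial `P`
of degree `n`, one has `a > 0`, and (provided `a ≠ 0`) on the unit sphere the traction of `𝒩`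
satisfies `λ(∇·𝒩)(x) x + μ(∇𝒩(x) + ∇𝒩(x)ᵗ) x = μ (2(2n+1)/a − 3) 𝒩(x)`. -/
theorem traction_of_N_field (lam mu : ℝ) (hmu : 0 < mu) (hconv : 0 < 3 * lam + 2 * mu)
    (n : ℕ) (P : MvPolynomial (Fin 3) ℝ)
    (hhom : P.IsHomogeneous n)
    (hharm : ∀ x, lap3 (polyFun P) x = 0) :
    let a : ℝ := (2 * (n : ℝ) * lam + 2 * (3 * (n : ℝ) + 1) * mu) /
      (((n : ℝ) + 3) * lam + ((n : ℝ) + 5) * mu)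
    let N : E3 → E3 := fun y => (a * polyFun P y) • y +
      (1 - a / (2 * (n : ℝ) + 1) - ‖y‖ ^ 2) • grad3 (polyFun P) y
    0 < a ∧
    (a ≠ 0 → ∀ x : E3, ‖x‖ = 1 →
      (lam * div3 N x) • x + mu • toE3 ((jac3 N x + (jac3 N x)ᵀ).mulVec fun i => x i)
        = (mu * (2 * (2 * (n : ℝ) + 1) / a - 3)) • N x) := by
  intro a N
  have hden : 0 < ((n : ℝ) + 3) * lam + ((n : ℝ) + 5) * mu := by nlinarith
  have ha : 0 < a := div_pos (by nlinarith) hden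
  refine ⟨ha, fun _ x hx => ?_⟩
  have hN : ∀ y i, N y i = polyFun (nFieldPoly a (1 - a / (2 * n + 1)) P i) y := fun y i => by
    simp only [N, nFieldPoly, PiLp.add_apply, PiLp.smul_apply, smul_eq_mul, grad3_polyFun_apply,
      polyFun, map_add, map_mul, map_sub, map_one, eval_C, eval_X, eval_sumSqX]
  have hS : eval (fun i => x i) sumSqX = 1 := by rw [eval_sumSqX, hx, one_pow]
  have hΔ : polyFun (∑ i, pderiv i (pderiv i P)) x = 0 := by rw [← lap3_polyFun]; exact hharm x
  ext i
  rw [traction_apply_of_polyFun hN, hhom.sum_pderiv_nFieldPoly, hhom.sum_X_mul_pderiv_nFieldPoly,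
    hhom.sum_X_mul_pderiv_nFieldPoly_transpose, PiLp.smul_apply, hN]
  simp only [nFieldPoly, polyFun, map_add, map_mul, map_sub, map_natCast, map_one, map_ofNat,
    eval_C, eval_X, hS, Fintype.card_fin, smul_eq_mul] at hΔ ⊢
  rw [hΔ]
  have hA : a * (((n : ℝ) + 3) * lam + ((n : ℝ) + 5) * mu) =
      2 * n * lam + 2 * (3 * n + 1) * mu :=
    div_mul_cancel₀ _ hden.ne'
  field_simp
  linear_combination (a * (2 * n + 1) * eval (fun i => x i) P * x i) * hA

end
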